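/- Let H be a complex Hilbert space, 𝔎 a unitary operator with 𝔎³ = Id, and E ⊆ H a 2-dimensional subspace invariant under 𝔎 and under a second operator 𝔄 (antiunitary, commuting with the relevant structure) that maps the 𝔎-eigenspace H_τ into H_τ̄ and H_τ̄ into H_τ and fixes H₁ setwise. Then either E ⊆ H₁ or E ⊆ H_τ ⊕ H_τ̄, where H_σ is the σ-eigenspace of 𝔎 for σ ∈ {1, τ, τ̄}, τ = e^{2πi/3}. -/

import Mathlib

/-- `τ = e^{2πi/3}`. -/
noncomputable def τ : ℂ := Complex.exp (2 * Real.pi * Complex.I / 3)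

/-!
Since `𝔎³ = 1`, every vector splits as `x = P₁ x + P_τ x + P_τ̄ x` with `P_σ = ⅓ ∑ₖ σ⁻ᵏ 𝔎ᵏ`,
and these projections are polynomials in `𝔎`, so they preserve `E`. If some `P_τ x` or `P_τ̄ x`
with `x ∈ E` is nonzero, applying the antiunitary `𝔄` (which is injective and swaps `H_τ` and
`H_τ̄`) yields nonzero eigenvectors for both `τ` and `τ̄` in `E`. Eigenvectors for the distinct
eigenvalues `1, τ, τ̄` are linearly independent, so `dim E = 2` forces `P₁ x = 0` for all
`x ∈ E`. Otherwise `x = P₁ x` for all `x ∈ E`.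
-/

open Module End

theorem isPrimitiveRoot_τ : IsPrimitiveRoot τ 3 := by
  have := Complex.isPrimitiveRoot_exp 3 three_ne_zero
  norm_num at this
  exact this

theorem conj_τ : starRingEnd ℂ τ = τ ^ 2 := by
  rw [← Complex.inv_eq_conj (isPrimitiveRoot_τ.norm'_eq_one three_ne_zero)]
  exact inv_eq_of_mul_eq_one_right (by rw [← pow_succ', isPrimitiveRoot_τ.pow_eq_one])

section CubeRootOfIdentity

variable {K V : Type*} [Field K] [AddCommGroup V] [Module K V]

/-- For `σ³ = 1` this is `⅓ ∑ₖ σ⁻ᵏ fᵏ`, written with `σ⁻¹ = σ²`, `σ⁻² = σ`. -/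
def cubeEigenProj (f : End K V) (σ : K) : End K V :=
  (3 : K)⁻¹ • (1 + σ ^ 2 • f + σ • f ^ 2)

theorem cubeEigenProj_apply (f : End K V) (σ : K) (x : V) :
    cubeEigenProj f σ x = (3 : K)⁻¹ • (x + σ ^ 2 • f x + σ • f (f x)) := by
  simp [cubeEigenProj, pow_two]

theorem apply_cubeEigenProj {f : End K V} (hf : ∀ x, f (f (f x)) = x) {σ : K} (hσ : σ ^ 3 = 1)
    (x : V) : f (cubeEigenProj f σ x) = σ • cubeEigenProj f σ x := by
  simp only [cubeEigenProj_apply, map_smul, map_add, hf]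
  match_scalars
  · linear_combination -(3 : K)⁻¹ * hσ
  all_goals ring

theorem cubeEigenProj_add_add {ζ : K} (hζ : IsPrimitiveRoot ζ 3) (f : End K V) (x : V) :
    cubeEigenProj f 1 x + cubeEigenProj f ζ x + cubeEigenProj f (ζ ^ 2) x = x := by
  have h3 : (3 : K) ≠ 0 := by
    have := hζ.neZero'
    exact_mod_cast NeZero.ne ((3 : ℕ) : K)
  have hsum : 1 + ζ + ζ ^ 2 = 0 := by
    simpa [Finset.sum_range_succ] using hζ.geom_sum_eq_zero (by norm_num)
  simp only [cubeEigenProj_apply]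
  match_scalars <;> field_simp
  · norm_num
  · linear_combination hsum + ζ * hζ.pow_eq_one
  · linear_combination hsum

theorem hasEigenvector_cubeEigenProj {f : End K V} (hf : ∀ x, f (f (f x)) = x) {σ : K}
    (hσ : σ ^ 3 = 1) {x : V} (hx : cubeEigenProj f σ x ≠ 0) :
    f.HasEigenvector σ (cubeEigenProj f σ x) :=
  hasEigenvector_iff.2 ⟨mem_eigenspace_iff.2 (apply_cubeEigenProj hf hσ x), hx⟩

theorem cubeEigenProj_mem {f : End K V} {E : Submodule K V} (hE : ∀ x ∈ E, f x ∈ E) (σ : K)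
    {x : V} (hx : x ∈ E) : cubeEigenProj f σ x ∈ E := by
  rw [cubeEigenProj_apply]
  exact E.smul_mem _ (E.add_mem (E.add_mem hx (E.smul_mem _ (hE x hx)))
    (E.smul_mem _ (hE _ (hE x hx))))

theorem Module.End.card_le_finrank_of_hasEigenvector {ι : Type*} [Fintype ι] (f : End K V)
    {E : Submodule K V} [Module.Finite K E] {μ : ι → K} (hμ : Function.Injective μ)
    {v : ι → V} (hv : ∀ i, f.HasEigenvector (μ i) (v i)) (hvE : ∀ i, v i ∈ E) :
    Fintype.card ι ≤ finrank K E := by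
  rw [← finrank_span_eq_card (f.eigenvectors_linearIndependent' μ hμ v hv)]
  exact Submodule.finrank_mono (Submodule.span_le.mpr (Set.range_subset_iff.mpr hvE))

theorem three_le_finrank_of_hasEigenvector_cubeRoots {ζ : K} (hζ : IsPrimitiveRoot ζ 3)
    (f : End K V) {E : Submodule K V} [Module.Finite K E] {u v w : V}
    (hu : f.HasEigenvector 1 u) (hv : f.HasEigenvector ζ v) (hw : f.HasEigenvector (ζ ^ 2) w)
    (huE : u ∈ E) (hvE : v ∈ E) (hwE : w ∈ E) : 3 ≤ finrank K E := by
  have hμ : Function.Injective fun i : Fin 3 => ζ ^ (i : ℕ) :=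
    fun i j h => Fin.ext (hζ.pow_inj i.2 j.2 h)
  simpa using f.card_le_finrank_of_hasEigenvector hμ (v := ![u, v, w])
    (fun i => by fin_cases i <;> simpa) (fun i => by fin_cases i <;> assumption)

theorem apply_eq_self_of_not_hasEigenvector {ζ : K} (hζ : IsPrimitiveRoot ζ 3) {f : End K V}
    (hf : ∀ x, f (f (f x)) = x) {E : Submodule K V} (hE : ∀ x ∈ E, f x ∈ E)
    (hnot : ∀ v ∈ E, ¬f.HasEigenvector ζ v ∧ ¬f.HasEigenvector (ζ ^ 2) v) {x : V} (hx : x ∈ E) :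
    f x = x := by
  have hPζ : cubeEigenProj f ζ x = 0 := by
    by_contra h
    exact (hnot _ (cubeEigenProj_mem hE ζ hx)).1 (hasEigenvector_cubeEigenProj hf hζ.pow_eq_one h)
  have hPζ2 : cubeEigenProj f (ζ ^ 2) x = 0 := by
    by_contra h
    exact (hnot _ (cubeEigenProj_mem hE _ hx)).2
      (hasEigenvector_cubeEigenProj hf (hζ.pow_of_coprime 2 (by decide)).pow_eq_one h)
  have hx1 := cubeEigenProj_add_add hζ f x
  rw [hPζ, hPζ2, add_zero, add_zero] at hx1
  have hfx := apply_cubeEigenProj hf (one_pow 3) x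
  rwa [one_smul, hx1] at hfx

theorem cubeEigenProj_add_eq_self_of_hasEigenvector {ζ : K} (hζ : IsPrimitiveRoot ζ 3)
    {f : End K V} (hf : ∀ x, f (f (f x)) = x) {E : Submodule K V} [Module.Finite K E]
    (hdim : finrank K E ≤ 2) (hE : ∀ x ∈ E, f x ∈ E) {v w : V} (hv : f.HasEigenvector ζ v)
    (hw : f.HasEigenvector (ζ ^ 2) w) (hvE : v ∈ E) (hwE : w ∈ E) {x : V} (hx : x ∈ E) :
    cubeEigenProj f ζ x + cubeEigenProj f (ζ ^ 2) x = x := by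
  have hP1 : cubeEigenProj f 1 x = 0 := by
    by_contra h
    have := three_le_finrank_of_hasEigenvector_cubeRoots hζ f
      (hasEigenvector_cubeEigenProj hf (one_pow 3) h) hv hw (cubeEigenProj_mem hE 1 hx) hvE hwE
    omega
  simpa only [hP1, zero_add] using cubeEigenProj_add_add hζ f x

end CubeRootOfIdentity

theorem eq_zero_of_inner_map_self_eq_conj {𝕜 E F : Type*} [RCLike 𝕜] [NormedAddCommGroup E]
    [InnerProductSpace 𝕜 E] [NormedAddCommGroup F] [InnerProductSpace 𝕜 F] {A : E → F}
    (hA : ∀ x, inner 𝕜 (A x) (A x) = starRingEnd 𝕜 (inner 𝕜 x x)) {x : E} (h : A x = 0) :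
    x = 0 := by
  simpa [h, eq_comm (a := (0 : 𝕜))] using hA x

theorem degenerate_eigenspace_dichotomy_general
    {H : Type*} [NormedAddCommGroup H] [InnerProductSpace ℂ H]
    (U : H →ₗᵢ[ℂ] H) (hU3 : ∀ x, U (U (U x)) = x)
    (A : H → H)
    (hAinner : ∀ x y : H, (inner ℂ (A x) (A y) : ℂ) = (starRingEnd ℂ) (inner ℂ x y))
    (hAτ : ∀ x, U x = τ • x → U (A x) = (starRingEnd ℂ) τ • A x)
    (hAτ' : ∀ x, U x = (starRingEnd ℂ) τ • x → U (A x) = τ • A x)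
    (E : Submodule ℂ H) (hdim : Module.finrank ℂ E = 2)
    (hEU : ∀ x ∈ E, U x ∈ E) (hEA : ∀ x ∈ E, A x ∈ E) :
    (∀ x ∈ E, U x = x) ∨
    (∀ x ∈ E, ∃ y z : H, U y = τ • y ∧ U z = (starRingEnd ℂ) τ • z ∧ x = y + z) := by
  set f : End ℂ H := U.toLinearMap
  have := Module.finite_of_finrank_eq_succ hdim
  have hA0 : ∀ {v}, v ≠ 0 → A v ≠ 0 := fun hv h =>
    hv (eq_zero_of_inner_map_self_eq_conj (fun x => hAinner x x) h)
  have hAτv : ∀ {v}, f.HasEigenvector τ v → f.HasEigenvector (τ ^ 2) (A v) := fun hv =>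
    hasEigenvector_iff.2 ⟨mem_eigenspace_iff.2 (conj_τ ▸ hAτ _ hv.apply_eq_smul), hA0 hv.2⟩
  have hAτ'v : ∀ {v}, f.HasEigenvector (τ ^ 2) v → f.HasEigenvector τ (A v) := fun hv =>
    hasEigenvector_iff.2 ⟨mem_eigenspace_iff.2 (hAτ' _ (conj_τ ▸ hv.apply_eq_smul)), hA0 hv.2⟩
  by_cases hτE : ∃ v ∈ E, f.HasEigenvector τ v ∨ f.HasEigenvector (τ ^ 2) v
  · obtain ⟨v, hvE, w, hwE, hv, hw⟩ :
        ∃ v ∈ E, ∃ w ∈ E, f.HasEigenvector τ v ∧ f.HasEigenvector (τ ^ 2) w := by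
      obtain ⟨v, hvE, hv | hv⟩ := hτE
      · exact ⟨v, hvE, A v, hEA v hvE, hv, hAτv hv⟩
      · exact ⟨A v, hEA v hvE, v, hvE, hAτ'v hv, hv⟩
    refine Or.inr fun x hx => ⟨cubeEigenProj f τ x, cubeEigenProj f (τ ^ 2) x,
      apply_cubeEigenProj hU3 isPrimitiveRoot_τ.pow_eq_one x, ?_, ?_⟩
    · rw [conj_τ]
      exact apply_cubeEigenProj hU3 (isPrimitiveRoot_τ.pow_of_coprime 2 (by decide)).pow_eq_one x
    · exact (cubeEigenProj_add_eq_self_of_hasEigenvector isPrimitiveRoot_τ hU3 hdim.le hEU hv hw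
        hvE hwE hx).symm
  · push Not at hτE
    exact Or.inl fun x hx => apply_eq_self_of_not_hasEigenvector isPrimitiveRoot_τ hU3 hEU hτE hx

/-- A 2-dimensional subspace `E` invariant under a cube-root-of-identity unitary `𝔎` and
an antiunitary `𝔄` (exchanging the `τ` and `τ̄` eigenspaces and preserving the
`1`-eigenspace) satisfies `E ⊆ H₁` or `E ⊆ H_τ ⊕ H_τ̄`. -/
theorem degenerate_eigenspace_dichotomy
    {H : Type*} [NormedAddCommGroup H] [InnerProductSpace ℂ H]
    (U : H →ₗᵢ[ℂ] H) (hU3 : ∀ x, U (U (U x)) = x)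
    (A : H → H)
    (hAadd : ∀ x y, A (x + y) = A x + A y)
    (hAsmul : ∀ (c : ℂ) (x : H), A (c • x) = (starRingEnd ℂ) c • A x)
    (hAinner : ∀ x y : H, (inner ℂ (A x) (A y) : ℂ) = (starRingEnd ℂ) (inner ℂ x y))
    (hAτ : ∀ x, U x = τ • x → U (A x) = (starRingEnd ℂ) τ • A x)
    (hAτ' : ∀ x, U x = (starRingEnd ℂ) τ • x → U (A x) = τ • A x)
    (hA1 : ∀ x, U x = x → U (A x) = A x)
    (E : Submodule ℂ H) (hdim : Module.finrank ℂ E = 2)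
    (hEU : ∀ x ∈ E, U x ∈ E) (hEA : ∀ x ∈ E, A x ∈ E) :
    (∀ x ∈ E, U x = x) ∨
    (∀ x ∈ E, ∃ y z : H, U y = τ • y ∧ U z = (starRingEnd ℂ) τ • z ∧ x = y + z) :=
  degenerate_eigenspace_dichotomy_general U hU3 A hAinner hAτ hAτ' E hdim hEU hEA
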